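/- arXiv:1510.05741 — 3 statements merged into one kernel-verified Lean document; each statement's English description precedes it below -/
import Mathlib

section
/- There exists a Schwartz function ψ on ℝ whose Fourier transform is supported in [-2,-1/2] ∪ [1/2,2] such that for every Schwartz function g on ℝ, g(0) = ∑_{j ∈ ℤ} 2^{-j} ∫_ℝ ψ(2^{-j} x) g(x) dx, with the sum converging. -/
/-!
Take a smooth even cutoff `step` that vanishes on `[-1/2, 1/2]` and equals `1` off `(-1, 1)`,
and let `bump ξ = step ξ - step (ξ / 2)`, supported in `1/2 ≤ |ξ| ≤ 2`. For `ξ ≠ 0` the series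
`∑ⱼ bump (2^j ξ)` telescopes to `1`. With `ψ = 𝓕⁻ bump`, rescaling and the self-adjointness of
`𝓕⁻` turn the `j`-th term into `∫ bump (2^j ξ) 𝓕⁻ g ξ dξ`; dominated convergence sums these to
`∫ 𝓕⁻ g = g 0`.
-/

open MeasureTheory Set
open scoped FourierTransform ContDiff

theorem Finset.sum_Ioc_sub_sub_one {G : Type*} [AddCommGroup G] (F : ℤ → G) {a b : ℤ}
    (hab : a ≤ b) : ∑ j ∈ Finset.Ioc a b, (F j - F (j - 1)) = F b - F a := by
  induction b, hab using Int.leInduction with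
  | base => simp
  | succ b hab ih =>
    rw [← Finset.insert_Ioc_right_eq_Ioc_add_one hab, Finset.sum_insert (by simp), ih]
    simp

open Filter in
theorem hasSum_int_sub_of_eventually_eq {G : Type*} [AddCommGroup G] [TopologicalSpace G]
    {F : ℤ → G} {a b : G} (ha : ∀ᶠ j in atBot, F j = a) (hb : ∀ᶠ j in atTop, F j = b) :
    HasSum (fun j ↦ F j - F (j - 1)) (b - a) := by
  obtain ⟨m, hm⟩ := eventually_atBot.1 ha
  obtain ⟨n, hn⟩ := eventually_atTop.1 hb
  have hvanish : ∀ j ∉ Finset.Ioc (min m n) n, F j - F (j - 1) = 0 := fun j hj ↦ by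
    rw [Finset.mem_Ioc, not_and_or, not_lt, not_le] at hj
    rcases hj with hj | hj
    · rw [hm j (hj.trans (min_le_left m n)), hm (j - 1) (by omega), sub_self]
    · rw [hn j hj.le, hn (j - 1) (by omega), sub_self]
  have hsum : HasSum (fun j ↦ F j - F (j - 1)) _ := hasSum_sum_of_ne_finset_zero hvanish
  rwa [Finset.sum_Ioc_sub_sub_one F (min_le_right m n), hn n le_rfl,
    hm _ (min_le_left m n)] at hsum

theorem hasSum_integral_smul_of_hasSum_one {ι α E : Type*} [Countable ι] [MeasurableSpace α]
    {μ : Measure α} [NormedAddCommGroup E] [NormedSpace ℝ E] {φ : ι → α → ℝ} {h : α → E}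
    (hφ : ∀ i, AEStronglyMeasurable (φ i) μ) (hφ_nonneg : ∀ i, ∀ᵐ x ∂μ, 0 ≤ φ i x)
    (hφ_sum : ∀ᵐ x ∂μ, HasSum (fun i ↦ φ i x) 1) (hh : Integrable h μ) :
    HasSum (fun i ↦ ∫ x, φ i x • h x ∂μ) (∫ x, h x ∂μ) := by
  refine hasSum_integral_of_dominated_convergence (fun i x ↦ φ i x * ‖h x‖)
    (fun i ↦ (hφ i).smul hh.aestronglyMeasurable) (fun i ↦ ?_) ?_ ?_ ?_
  · filter_upwards [hφ_nonneg i] with x hx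
    rw [norm_smul, Real.norm_of_nonneg hx]
  · filter_upwards [hφ_sum] with x hx
    exact (hx.mul_right _).summable
  · refine hh.norm.congr ?_
    filter_upwards [hφ_sum] with x hx
    rw [(hx.mul_right _).tsum_eq, one_mul]
  · filter_upwards [hφ_sum] with x hx
    simpa using hx.smul_const (h x)

section Fourier

open Module

variable {V E : Type*} [NormedAddCommGroup V] [InnerProductSpace ℝ V] [FiniteDimensional ℝ V]
  [MeasurableSpace V] [BorelSpace V] [NormedAddCommGroup E] [NormedSpace ℂ E]

theorem Real.fourierInv_comp_smul (f : V → E) {c : ℝ} (hc : c ≠ 0) (w : V) :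
    𝓕⁻ (fun x ↦ f (c • x)) w = |(c ^ finrank ℝ V)⁻¹| • 𝓕⁻ f (c⁻¹ • w) := by
  have hinner : ∀ v : V, inner ℝ v w = inner ℝ (c • v) (c⁻¹ • w) := fun v ↦ by
    rw [inner_smul_left, inner_smul_right, RCLike.conj_to_real, ← mul_assoc, mul_inv_cancel₀ hc,
      one_mul]
  simp_rw [Real.fourierInv_eq, hinner]
  exact Measure.integral_comp_smul volume (fun u ↦ 𝐞 (inner ℝ u (c⁻¹ • w)) • f u) c

theorem SchwartzMap.integral_fourierInv_comp_smul_mul (f g : SchwartzMap V ℂ) {c : ℝ}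
    (hc : c ≠ 0) :
    |(c ^ finrank ℝ V)⁻¹| • ∫ x, 𝓕⁻ f (c⁻¹ • x) * g x = ∫ ξ, f (c • ξ) * 𝓕⁻ g ξ := by
  let fc : SchwartzMap V ℂ := compCLMOfContinuousLinearEquiv ℂ
    (ContinuousLinearEquiv.smulLeft (R₁ := ℝ) (Units.mk0 c hc)) f
  have hfourier : ∀ x, 𝓕⁻ fc x = |(c ^ finrank ℝ V)⁻¹| • 𝓕⁻ f (c⁻¹ • x) := fun x ↦ by
    rw [fourierInv_coe, fourierInv_coe, ← Real.fourierInv_comp_smul _ hc]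
    rfl
  calc |(c ^ finrank ℝ V)⁻¹| • ∫ x, 𝓕⁻ f (c⁻¹ • x) * g x = ∫ x, 𝓕⁻ fc x * g x := by
        simp_rw [hfourier, smul_mul_assoc, integral_smul]
    _ = ∫ ξ, fc ξ * 𝓕⁻ g ξ := integral_fourierInv_mul_eq fc g

theorem SchwartzMap.integral_fourierInv_eq [CompleteSpace E] (g : SchwartzMap V E) :
    ∫ ξ, 𝓕⁻ g ξ = g 0 := by
  rw [← DFunLike.congr_fun (FourierInvPair.fourier_fourierInv_eq (F := SchwartzMap V E) g) 0,
    SchwartzMap.fourier_coe, Real.fourier_eq]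
  simp

end Fourier

namespace DyadicDecomposition

/-- `ξ ↦ (4 ξ ^ 2 - 1) / 3` sends `|ξ| = 1/2` to `0` and `|ξ| = 1` to `1`. -/
noncomputable def step (ξ : ℝ) : ℝ := Real.smoothTransition ((4 * ξ ^ 2 - 1) / 3)

theorem contDiff_step : ContDiff ℝ ∞ step := by
  unfold step
  fun_prop

theorem step_eq_zero {ξ : ℝ} (h : |ξ| ≤ 1 / 2) : step ξ = 0 := by
  have : ξ ^ 2 ≤ (1 / 2) ^ 2 := sq_le_sq.2 (by rwa [abs_of_pos (by norm_num : (0 : ℝ) < 1 / 2)])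
  exact Real.smoothTransition.zero_of_nonpos (by linarith)

theorem step_eq_one {ξ : ℝ} (h : 1 ≤ |ξ|) : step ξ = 1 := by
  have : 1 ^ 2 ≤ ξ ^ 2 := sq_le_sq.2 (by rwa [abs_one])
  exact Real.smoothTransition.one_of_one_le (by linarith)

theorem step_le_step {a b : ℝ} (h : |a| ≤ |b|) : step a ≤ step b := by
  have := sq_le_sq.2 h
  exact Real.smoothTransition.monotone (by linarith)

noncomputable def bump (ξ : ℝ) : ℝ := step ξ - step (ξ / 2)

theorem contDiff_bump : ContDiff ℝ ∞ bump :=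
  contDiff_step.sub (contDiff_step.comp (contDiff_id.div_const 2))

theorem bump_nonneg (ξ : ℝ) : 0 ≤ bump ξ :=
  sub_nonneg.2 (step_le_step (by rw [abs_div, abs_two]; linarith [abs_nonneg ξ]))

theorem bump_eq_zero_of_abs_le {ξ : ℝ} (h : |ξ| ≤ 1 / 2) : bump ξ = 0 := by
  rw [bump, step_eq_zero h, step_eq_zero (by rw [abs_div, abs_two]; linarith [abs_nonneg ξ]),
    sub_zero]

theorem bump_eq_zero_of_le_abs {ξ : ℝ} (h : 2 ≤ |ξ|) : bump ξ = 0 := by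
  rw [bump, step_eq_one (by linarith), step_eq_one (by rw [abs_div, abs_two]; linarith), sub_self]

theorem support_bump : Function.support bump ⊆ Icc (-2) (-(1 / 2)) ∪ Icc (1 / 2) 2 := by
  intro ξ hξ
  have hlow : 1 / 2 < |ξ| := not_le.1 fun h ↦ hξ (bump_eq_zero_of_abs_le h)
  have hhigh : |ξ| < 2 := not_le.1 fun h ↦ hξ (bump_eq_zero_of_le_abs h)
  rcases abs_cases ξ with ⟨hξ, -⟩ | ⟨hξ, -⟩
  · exact Or.inr ⟨by linarith, by linarith⟩
  · exact Or.inl ⟨by linarith, by linarith⟩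

theorem hasCompactSupport_bump : HasCompactSupport bump :=
  .of_support_subset_isCompact (isCompact_Icc.union isCompact_Icc) support_bump

theorem hasSum_bump_two_zpow_mul {ξ : ℝ} (hξ : ξ ≠ 0) :
    HasSum (fun j : ℤ ↦ bump (2 ^ j * ξ)) 1 := by
  obtain ⟨n, hn_lt, hn_le⟩ := exists_mem_Ioc_zpow (abs_pos.2 hξ) one_lt_two
  have habs : ∀ j : ℤ, |(2 : ℝ) ^ j * ξ| = 2 ^ j * |ξ| := fun j ↦ by
    rw [abs_mul, abs_of_pos (zpow_pos two_pos j)]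
  have hlow : ∀ j ≤ -n - 2, step (2 ^ j * ξ) = 0 := fun j hj ↦ step_eq_zero <| by
    calc |(2 : ℝ) ^ j * ξ| ≤ 2 ^ (-n - 2) * 2 ^ (n + 1) := by
          rw [habs]; gcongr; norm_num
      _ = 1 / 2 := by
          rw [← zpow_add₀ two_ne_zero, show -n - 2 + (n + 1) = -1 by ring]; norm_num
  have hhigh : ∀ j ≥ -n, step (2 ^ j * ξ) = 1 := fun j hj ↦ step_eq_one <| by
    calc (1 : ℝ) = 2 ^ (-n) * 2 ^ n := by rw [← zpow_add₀ two_ne_zero]; simp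
      _ ≤ |(2 : ℝ) ^ j * ξ| := by rw [habs]; gcongr; norm_num
  have htel := hasSum_int_sub_of_eventually_eq (F := fun j : ℤ ↦ step (2 ^ j * ξ))
    (Filter.eventually_atBot.2 ⟨_, hlow⟩) (Filter.eventually_atTop.2 ⟨_, hhigh⟩)
  have hbump : ∀ j : ℤ, bump (2 ^ j * ξ) = step (2 ^ j * ξ) - step (2 ^ (j - 1) * ξ) :=
    fun j ↦ by rw [bump, zpow_sub₀ two_ne_zero, zpow_one, div_mul_eq_mul_div]
  simpa only [hbump, sub_zero] using htel

end DyadicDecomposition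

open DyadicDecomposition in
/-- There exists a Schwartz function `ψ` on `ℝ` whose Fourier transform is supported in
`[-2,-1/2] ∪ [1/2,2]` such that for every Schwartz function `g`,
`g 0 = ∑_{j ∈ ℤ} 2^{-j} ∫ ψ(2^{-j} x) g x dx`. -/
theorem delta_dyadic_decomposition :
    ∃ ψ : SchwartzMap ℝ ℂ,
      (Function.support (𝓕 (⇑ψ)) ⊆ Icc (-2 : ℝ) (-(1/2)) ∪ Icc (1/2 : ℝ) 2) ∧
      ∀ g : SchwartzMap ℝ ℂ,
        HasSum (fun j : ℤ => (2 : ℂ) ^ (-j) * ∫ x : ℝ, ψ ((2 : ℝ) ^ (-j) * x) * g x) (g 0) := by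
  let φ : SchwartzMap ℝ ℂ := (hasCompactSupport_bump.comp_left Complex.ofReal_zero).toSchwartzMap
    (Complex.ofRealCLM.contDiff.comp contDiff_bump)
  have hφ : ∀ ξ, φ ξ = bump ξ := fun _ ↦ rfl
  refine ⟨𝓕⁻ φ, ?_, fun g ↦ ?_⟩
  · rw [← SchwartzMap.fourier_coe, FourierInvPair.fourier_fourierInv_eq]
    exact (Function.support_comp_eq _ Complex.ofReal_eq_zero bump).trans_subset support_bump
  have hterm : ∀ j : ℤ, (2 : ℂ) ^ (-j) * ∫ x : ℝ, 𝓕⁻ φ ((2 : ℝ) ^ (-j) * x) * g x =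
      ∫ ξ, bump (2 ^ j * ξ) • 𝓕⁻ g ξ := fun j ↦ by
    simpa [hφ, Complex.real_smul] using
      SchwartzMap.integral_fourierInv_comp_smul_mul φ g (zpow_ne_zero j two_ne_zero)
  rw [funext hterm, ← SchwartzMap.integral_fourierInv_eq g]
  refine hasSum_integral_smul_of_hasSum_one (fun j ↦ ?_) (fun j ↦ .of_forall fun ξ ↦ bump_nonneg _)
    ?_ (𝓕⁻ g).integrable
  · exact (contDiff_bump.continuous.comp (continuous_const_mul _)).aestronglyMeasurable
  · filter_upwards [volume.ae_ne 0] with ξ hξ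
    exact hasSum_bump_two_zpow_mul hξ
end

section
/- Let χ be a smooth function on ℝ supported in [1,2] with ∫ χ = 1/2, let φ̂(ξ) = χ(ξ) + χ(-ξ), let φ be its inverse Fourier transform, and set ψ(x) = (φ(x/2) - φ(x))/x. Then the Fourier transform of ψ satisfies ψ̂(t) = -2πi ∫_{-∞}^t (2χ(2s) - χ(s) + 2χ(-2s) - χ(-s)) ds, and ψ̂(t) = 0 whenever |t| ≥ 2 or |t| ≤ 1/2. -/
open MeasureTheory Set Real
open scoped FourierTransform RealInnerProductSpace

/-- Let `χ` be smooth, supported in `[1,2]`, with `∫ χ = 1/2`; let `φ̂(ξ) = χ(ξ) + χ(-ξ)`,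
`φ` its inverse Fourier transform, and `ψ(x) = (φ(x/2) - φ(x))/x`. Then
`ψ̂(t) = -2πi ∫_{-∞}^t (2χ(2s) - χ(s) + 2χ(-2s) - χ(-s)) ds`, and `ψ̂(t) = 0` for
`|t| ≥ 2` or `|t| ≤ 1/2`. -/
theorem fourier_transform_of_pv_piece
    (χ : ℝ → ℂ) (hχ_smooth : ContDiff ℝ (⊤ : ℕ∞) χ)
    (hχ_supp : Function.support χ ⊆ Icc (1 : ℝ) 2)
    (hχ_int : ∫ x : ℝ, χ x = 1/2)
    (φ : ℝ → ℂ) (hφ : φ = 𝓕⁻ (fun ξ : ℝ => χ ξ + χ (-ξ)))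
    (ψ : ℝ → ℂ) (hψ : ψ = fun x : ℝ => (φ (x/2) - φ x) / (x : ℂ)) :
    (∀ t : ℝ, 𝓕 ψ t
        = (-(2 * π * Complex.I)) *
          ∫ s in Iic t, (2 * χ (2*s) - χ s + 2 * χ (-(2*s)) - χ (-s))) ∧
    (∀ t : ℝ, (2 ≤ |t| ∨ |t| ≤ 1/2) → 𝓕 ψ t = 0) := by
  classical
  set c : ℂ := -(2 * (π : ℂ) * Complex.I) with hc
  have hc_ne : c ≠ 0 := by
    simp [hc, Real.pi_ne_zero, Complex.I_ne_zero, Complex.ofReal_ne_zero]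
  have hχc : Continuous χ := hχ_smooth.continuous
  -- χ vanishes outside the open interval (1,2)
  have hlow : ∀ x : ℝ, x < 1 → χ x = 0 := by
    intro x hx
    by_contra h
    exact absurd (hχ_supp h).1 (not_le.2 hx)
  have hhigh : ∀ x : ℝ, 2 < x → χ x = 0 := by
    intro x hx
    by_contra h
    exact absurd (hχ_supp h).2 (not_le.2 hx)
  have hχ1 : χ 1 = 0 := by
    have h : Set.EqOn χ (fun _ => (0 : ℂ)) (closure (Iio (1 : ℝ))) :=
      Set.EqOn.closure (fun x hx => hlow x hx) hχc continuous_const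
    simpa using h (by simp [closure_Iio])
  have hχ2 : χ 2 = 0 := by
    have h : Set.EqOn χ (fun _ => (0 : ℂ)) (closure (Ioi (2 : ℝ))) :=
      Set.EqOn.closure (fun x hx => hhigh x hx) hχc continuous_const
    simpa using h (by simp [closure_Ioi])
  have hχ0 : ∀ x : ℝ, ¬(1 < x ∧ x < 2) → χ x = 0 := by
    intro x hx
    rcases lt_trichotomy x 1 with h | h | h
    · exact hlow x h
    · rw [h]; exact hχ1
    · rcases lt_trichotomy x 2 with h2 | h2 | h2
      · exact absurd ⟨h, h2⟩ hx
      · rw [h2]; exact hχ2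
      · exact hhigh x h2
  have hχcs : HasCompactSupport χ :=
    HasCompactSupport.intro isCompact_Icc (fun x hx => by
      by_contra h; exact hx (hχ_supp h))
  have hχ_int' : Integrable χ := hχc.integrable_of_hasCompactSupport hχcs
  -- the function g
  set g : ℝ → ℂ := fun s => 2 * χ (2*s) - χ s + 2 * χ (-(2*s)) - χ (-s) with hg_def
  have hg0 : ∀ s : ℝ, 2 ≤ |s| ∨ |s| ≤ 1/2 → g s = 0 := by
    intro s hs
    have h1 : χ (2*s) = 0 := by
      apply hχ0; rintro ⟨ha, hb⟩
      rcases hs with h | h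
      · rcases le_abs.1 h with h' | h' <;> linarith
      · have := abs_le.1 h; linarith [this.1, this.2]
    have h2 : χ s = 0 := by
      apply hχ0; rintro ⟨ha, hb⟩
      rcases hs with h | h
      · rcases le_abs.1 h with h' | h' <;> linarith
      · have := abs_le.1 h; linarith [this.1, this.2]
    have h3 : χ (-(2*s)) = 0 := by
      apply hχ0; rintro ⟨ha, hb⟩
      rcases hs with h | h
      · rcases le_abs.1 h with h' | h' <;> linarith
      · have := abs_le.1 h; linarith [this.1, this.2]
    have h4 : χ (-s) = 0 := by
      apply hχ0; rintro ⟨ha, hb⟩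
      rcases hs with h | h
      · rcases le_abs.1 h with h' | h' <;> linarith
      · have := abs_le.1 h; linarith [this.1, this.2]
    simp [hg_def, h1, h2, h3, h4]
  have hg_smooth : ContDiff ℝ (⊤ : ℕ∞) g := by
    have l1 : ContDiff ℝ (⊤ : ℕ∞) (fun s : ℝ => χ (2*s)) :=
      hχ_smooth.comp (contDiff_const.mul contDiff_id)
    have l2 : ContDiff ℝ (⊤ : ℕ∞) (fun s : ℝ => χ (-(2*s))) :=
      hχ_smooth.comp ((contDiff_const.mul contDiff_id).neg)
    have l3 : ContDiff ℝ (⊤ : ℕ∞) (fun s : ℝ => χ (-s)) :=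
      hχ_smooth.comp contDiff_neg
    exact (((contDiff_const.mul l1).sub hχ_smooth).add (contDiff_const.mul l2)).sub l3
  have hg_cont : Continuous g := hg_smooth.continuous
  have hgcs : HasCompactSupport g := by
    apply HasCompactSupport.intro (isCompact_Icc (a := (-2 : ℝ)) (b := 2))
    intro x hx
    apply hg0
    left
    simp only [mem_Icc, not_and_or, not_le] at hx
    rcases hx with h | h
    · rw [abs_of_nonpos (by linarith)]; linarith
    · rw [abs_of_nonneg (by linarith)]; linarith
  have hg_int : Integrable g := hg_cont.integrable_of_hasCompactSupport hgcs
  -- total integral of g is zero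
  have e1 : ∫ s : ℝ, χ (2*s) = ((2:ℝ)⁻¹ : ℝ) • ∫ x : ℝ, χ x := by
    rw [Measure.integral_comp_mul_left χ 2]
    congr 1
    norm_num
  have e2 : ∫ s : ℝ, χ (-(2*s)) = ((2:ℝ)⁻¹ : ℝ) • ∫ x : ℝ, χ x := by
    have h : (fun s : ℝ => χ (-(2*s))) = fun s : ℝ => χ ((-2)*s) := by
      funext s; congr 1; ring
    rw [h, Measure.integral_comp_mul_left χ (-2)]
    congr 1
    rw [abs_inv]
    norm_num
  have e3 : ∫ s : ℝ, χ (-s) = ∫ x : ℝ, χ x := by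
    have h : (fun s : ℝ => χ (-s)) = fun s : ℝ => χ ((-1)*s) := by
      funext s; congr 1; ring
    rw [h, Measure.integral_comp_mul_left χ (-1)]
    norm_num
  have i1 : Integrable (fun s : ℝ => χ (2*s)) := by
    apply Continuous.integrable_of_hasCompactSupport
    · exact hχc.comp (continuous_const.mul continuous_id)
    · apply HasCompactSupport.intro (isCompact_Icc (a := (0 : ℝ)) (b := 1))
      intro x hx
      apply hχ0
      simp only [mem_Icc, not_and_or, not_le] at hx
      rintro ⟨ha, hb⟩
      rcases hx with h | h <;> linarith
  have i2 : Integrable (fun s : ℝ => χ (-(2*s))) := by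
    apply Continuous.integrable_of_hasCompactSupport
    · exact hχc.comp ((continuous_const.mul continuous_id).neg)
    · apply HasCompactSupport.intro (isCompact_Icc (a := (-1 : ℝ)) (b := 0))
      intro x hx
      apply hχ0
      simp only [mem_Icc, not_and_or, not_le] at hx
      rintro ⟨ha, hb⟩
      rcases hx with h | h <;> linarith
  have i3 : Integrable (fun s : ℝ => χ (-s)) := by
    apply Continuous.integrable_of_hasCompactSupport
    · exact hχc.comp continuous_neg
    · apply HasCompactSupport.intro (isCompact_Icc (a := (-2 : ℝ)) (b := -1))
      intro x hx
      apply hχ0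
      simp only [mem_Icc, not_and_or, not_le] at hx
      rintro ⟨ha, hb⟩
      rcases hx with h | h <;> linarith
  have hg_total : ∫ s : ℝ, g s = 0 := by
    have step : ∫ s : ℝ, g s
        = 2 * (∫ s : ℝ, χ (2*s)) - (∫ s : ℝ, χ s) + 2 * (∫ s : ℝ, χ (-(2*s)))
          - ∫ s : ℝ, χ (-s) := by
      rw [hg_def]
      rw [integral_sub, integral_add, integral_sub, MeasureTheory.integral_const_mul,
        MeasureTheory.integral_const_mul]
      all_goals
        first
        | rfl
        | exact i1.const_mul 2
        | exact hχ_int'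
        | exact (i1.const_mul 2).sub hχ_int'
        | exact i2.const_mul 2
        | exact ((i1.const_mul 2).sub hχ_int').add (i2.const_mul 2)
        | exact i3
    rw [step, e1, e2, e3, Complex.real_smul]
    push_cast
    ring
  -- G and F
  set G : ℝ → ℂ := fun t => ∫ s in Iic t, g s with hG_def
  have hGt : ∀ t : ℝ, G t = ∫ s in Iic t, g s := fun _ => rfl
  have hGi : ∀ t : ℝ, IntegrableOn g (Iic t) := fun t => hg_int.integrableOn
  have hG_deriv : ∀ t : ℝ, HasDerivAt G (g t) t := by
    intro t
    have h1 : G = fun u : ℝ => (∫ s in Iic 0, g s) + ∫ s in (0:ℝ)..u, g s := by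
      funext u
      rw [hGt u, ← intervalIntegral.integral_Iic_sub_Iic (hGi 0) (hGi u)]
      ring
    rw [h1]
    apply HasDerivAt.const_add
    exact intervalIntegral.integral_hasDerivAt_right hg_int.intervalIntegrable
      (hg_cont.stronglyMeasurableAtFilter _ _) hg_cont.continuousAt
  set F : ℝ → ℂ := fun t => c * G t with hF_def
  have hFt : ∀ t : ℝ, F t = c * G t := fun _ => rfl
  have hF_deriv : ∀ t : ℝ, HasDerivAt F (c * g t) t := fun t => (hG_deriv t).const_mul c
  have hF_diff : Differentiable ℝ F := fun t => (hF_deriv t).differentiableAt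
  have hF_deriv' : deriv F = fun t => c * g t := funext fun t => (hF_deriv t).deriv
  have hF_cont : Continuous F := hF_diff.continuous
  -- vanishing of G
  have hG_neg : ∀ t : ℝ, t ≤ -2 → G t = 0 := by
    intro t ht
    rw [hGt t]
    apply setIntegral_eq_zero_of_forall_eq_zero
    intro s hs
    have hs' : s ≤ -2 := le_trans hs ht
    exact hg0 s (Or.inl (by rw [abs_of_nonpos (by linarith)]; linarith))
  have hG_pos : ∀ t : ℝ, 2 ≤ t → G t = 0 := by
    intro t ht
    have hsplit := intervalIntegral.integral_Iic_add_Ioi (hGi t) hg_int.integrableOn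
    have hIoi : ∫ s in Ioi t, g s = 0 := by
      apply setIntegral_eq_zero_of_forall_eq_zero
      intro s hs
      have hs' : 2 ≤ s := le_trans ht (le_of_lt hs)
      exact hg0 s (Or.inl (by rw [abs_of_nonneg (by linarith)]; exact hs'))
    rw [hGt t]
    rw [hIoi, add_zero, hg_total] at hsplit
    exact hsplit
  have even_g : ∀ s : ℝ, g (-s) = g s := by
    intro s
    have a1 : 2 * (-s) = -(2*s) := by ring
    have a2 : -(2 * (-s)) = 2*s := by ring
    have a3 : -(-s) = s := by ring
    simp only [hg_def, a1, a2, a3]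
    ring
  have hIic_half : ∫ s in Iic (-(1/2) : ℝ), g s = 0 := by
    have h1 : ∫ s in Iic (-(1/2) : ℝ), g s = ∫ s in Ioi ((1/2) : ℝ), g s := by
      rw [← integral_comp_neg_Ioi]
      exact (setIntegral_congr_fun measurableSet_Ioi fun x _ => even_g x)
    have h2 := intervalIntegral.integral_Iic_sub_Iic (hGi (-(1/2))) (hGi (1/2))
    have h3 : ∫ s in (-(1/2) : ℝ)..(1/2 : ℝ), g s = 0 := by
      rw [intervalIntegral.integral_of_le (by norm_num)]
      apply setIntegral_eq_zero_of_forall_eq_zero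
      intro s hs
      simp only [mem_Ioc] at hs
      exact hg0 s (Or.inr (abs_le.2 ⟨by linarith [hs.1], hs.2⟩))
    have h4 := intervalIntegral.integral_Iic_add_Ioi (hGi (1/2)) hg_int.integrableOn
    have h2' : (∫ s in Iic ((1/2) : ℝ), g s) - ∫ s in Iic (-(1/2) : ℝ), g s = 0 :=
      h2.trans h3
    rw [hg_total] at h4
    linear_combination (h1 + h4 - h2') / 2
  have hG_mid : ∀ t : ℝ, |t| ≤ 1/2 → G t = 0 := by
    intro t ht
    have habs := abs_le.1 ht
    have h2 := intervalIntegral.integral_Iic_sub_Iic (hGi (-(1/2))) (hGi t)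
    have h3 : ∫ s in (-(1/2) : ℝ)..t, g s = 0 := by
      rw [intervalIntegral.integral_of_le habs.1]
      apply setIntegral_eq_zero_of_forall_eq_zero
      intro s hs
      simp only [mem_Ioc] at hs
      exact hg0 s (Or.inr (abs_le.2 ⟨by linarith [hs.1], le_trans hs.2 habs.2⟩))
    rw [hGt t]
    linear_combination h2 + hIic_half + h3
  have hG_zero : ∀ t : ℝ, 2 ≤ |t| ∨ |t| ≤ 1/2 → G t = 0 := by
    intro t ht
    rcases ht with h | h
    · rcases le_abs.1 h with h' | h'
      · exact hG_pos t h'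
      · exact hG_neg t (by linarith)
    · exact hG_mid t h
  -- compact support of F
  have hF0 : ∀ x : ℝ, x ∉ Icc (-2 : ℝ) 2 → F x = 0 := by
    intro x hx
    have h2 : 2 ≤ |x| := by
      simp only [mem_Icc, not_and_or, not_le] at hx
      rcases hx with h | h
      · rw [abs_of_nonpos (by linarith)]; linarith
      · rw [abs_of_nonneg (by linarith)]; linarith
    rw [hFt x, hG_zero x (Or.inl h2), mul_zero]
  have hFcs : HasCompactSupport F :=
    HasCompactSupport.intro isCompact_Icc hF0
  have hF_int : Integrable F := hF_cont.integrable_of_hasCompactSupport hFcs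
  have hF'_int : Integrable (deriv F) := by
    rw [hF_deriv']; exact hg_int.const_mul c
  have hg_diff : Differentiable ℝ g := hg_smooth.differentiable (by simp)
  have hdF_diff : Differentiable ℝ (deriv F) := by
    rw [hF_deriv']; exact hg_diff.const_mul c
  have hderiv2 : deriv (deriv F) = fun t => c * deriv g t := by
    rw [hF_deriv']
    funext t
    exact deriv_const_mul c (hg_diff t)
  have hg'_cont : Continuous (deriv g) := hg_smooth.continuous_deriv (by simp)
  have hg'_cs : HasCompactSupport (deriv g) := hgcs.deriv
  have hdF'_int : Integrable (deriv (deriv F)) := by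
    rw [hderiv2]
    exact (hg'_cont.integrable_of_hasCompactSupport hg'_cs).const_mul c
  -- Fourier transform of derivatives
  have key1 : 𝓕 (deriv F) = fun x : ℝ => (2 * π * Complex.I * x) • 𝓕 F x :=
    Real.fourier_deriv hF_int hF_diff hF'_int
  have key2 : 𝓕 (deriv (deriv F)) = fun x : ℝ => (2 * π * Complex.I * x) • 𝓕 (deriv F) x :=
    Real.fourier_deriv hF'_int hdF_diff hdF'_int
  -- integrability of 𝓕 F
  have hbound1 : ∀ ξ : ℝ, ‖𝓕 F ξ‖ ≤ ∫ x : ℝ, ‖F x‖ := fun ξ =>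
    VectorFourier.norm_fourierIntegral_le_integral_norm _ _ _ _ _
  have hbound2 : ∀ ξ : ℝ, ‖𝓕 (deriv (deriv F)) ξ‖ ≤ ∫ x : ℝ, ‖deriv (deriv F) x‖ := fun ξ =>
    VectorFourier.norm_fourierIntegral_le_integral_norm _ _ _ _ _
  have hA0 : 0 ≤ ∫ x : ℝ, ‖F x‖ := integral_nonneg fun x => norm_nonneg _
  have hB0 : 0 ≤ ∫ x : ℝ, ‖deriv (deriv F) x‖ := integral_nonneg fun x => norm_nonneg _
  have hFhat_bound : ∀ ξ : ℝ,
      ‖𝓕 F ξ‖ ≤ ((∫ x : ℝ, ‖F x‖) + ∫ x : ℝ, ‖deriv (deriv F) x‖) * (1 + ξ^2)⁻¹ := by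
    intro ξ
    have hpos : (0:ℝ) < 1 + ξ^2 := by positivity
    have hnorm : ‖𝓕 (deriv (deriv F)) ξ‖ = (2*π*|ξ|)^2 * ‖𝓕 F ξ‖ := by
      rw [congrFun key2 ξ, congrFun key1 ξ, norm_smul, norm_smul]
      have hn : ‖(2*(π:ℂ)*Complex.I*(ξ:ℂ))‖ = 2*π*|ξ| := by
        simp [norm_mul, Complex.norm_real, Real.norm_eq_abs, abs_of_pos Real.pi_pos]
      rw [hn]
      ring
    have hq : ξ^2 * ‖𝓕 F ξ‖ ≤ ∫ x : ℝ, ‖deriv (deriv F) x‖ := by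
      have hb := hbound2 ξ
      rw [hnorm] at hb
      have habs : (2*π*|ξ|)^2 = 4*π^2*ξ^2 := by
        rw [mul_pow, mul_pow, sq_abs]; ring
      rw [habs] at hb
      have hpi : (3:ℝ) ≤ π := by linarith [Real.pi_gt_three]
      have hπ2 : (1:ℝ) ≤ 4*π^2 := by nlinarith
      have hxx : 0 ≤ ξ^2 * ‖𝓕 F ξ‖ := mul_nonneg (sq_nonneg ξ) (norm_nonneg _)
      calc ξ^2 * ‖𝓕 F ξ‖ = 1 * (ξ^2 * ‖𝓕 F ξ‖) := (one_mul _).symm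
        _ ≤ 4*π^2 * (ξ^2 * ‖𝓕 F ξ‖) := mul_le_mul_of_nonneg_right hπ2 hxx
        _ = 4*π^2*ξ^2 * ‖𝓕 F ξ‖ := by ring
        _ ≤ ∫ x : ℝ, ‖deriv (deriv F) x‖ := hb
    have hmain : ‖𝓕 F ξ‖ * (1 + ξ^2)
        ≤ (∫ x : ℝ, ‖F x‖) + ∫ x : ℝ, ‖deriv (deriv F) x‖ := by
      have h1 := hbound1 ξ
      nlinarith [hq]
    calc ‖𝓕 F ξ‖ = (‖𝓕 F ξ‖ * (1 + ξ^2)) * (1 + ξ^2)⁻¹ := by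
          field_simp
      _ ≤ ((∫ x : ℝ, ‖F x‖) + ∫ x : ℝ, ‖deriv (deriv F) x‖) * (1 + ξ^2)⁻¹ := by
          gcongr
  have hxF_int : Integrable (fun x : ℝ => ‖x‖ * ‖F x‖) := by
    apply Continuous.integrable_of_hasCompactSupport
    · exact (continuous_norm.mul hF_cont.norm)
    · apply HasCompactSupport.intro (isCompact_Icc (a := (-2 : ℝ)) (b := 2))
      intro x hx
      rw [hF0 x hx]
      simp
  have hFhat_cont : Continuous (𝓕 F) :=
    (Real.differentiable_fourier hF_int hxF_int).continuous
  have hFhat_int : Integrable (𝓕 F) := by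
    apply (((integrable_inv_one_add_sq).const_mul
      ((∫ x : ℝ, ‖F x‖) + ∫ x : ℝ, ‖deriv (deriv F) x‖)).mono'
      hFhat_cont.aestronglyMeasurable)
    exact Filter.Eventually.of_forall fun ξ => hFhat_bound ξ
  -- Fourier inversion
  have hinv : 𝓕 (𝓕⁻ F) = F := hF_cont.fourier_fourierInv_eq hF_int hFhat_int
  -- the inverse Fourier transform of g
  set h : ℝ → ℂ := fun ξ => χ ξ + χ (-ξ) with hh_def
  have hφh : φ = 𝓕⁻ h := hφ
  have hh0 : ∀ ξ : ℝ, ξ ∉ Icc (-2 : ℝ) 2 → h ξ = 0 := by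
    intro ξ hξ
    simp only [mem_Icc, not_and_or, not_le] at hξ
    have c1 : χ ξ = 0 := by
      apply hχ0; rintro ⟨ha, hb⟩; rcases hξ with h' | h' <;> linarith
    have c2 : χ (-ξ) = 0 := by
      apply hχ0; rintro ⟨ha, hb⟩; rcases hξ with h' | h' <;> linarith
    simp [hh_def, c1, c2]
  have hh_cont : Continuous h := by
    rw [hh_def]; exact hχc.add (hχc.comp continuous_neg)
  have heq : ∀ (f : ℝ → ℂ) (y : ℝ),
      𝓕⁻ f y = ∫ v : ℝ, Complex.exp ((2*π*(v*y) : ℝ) * Complex.I) * f v := by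
    intro f y
    rw [Real.fourierInv_eq']
    simp only [RCLike.inner_apply, starRingEnd_apply, star_trivial, smul_eq_mul]
    simp_rw [mul_comm y]
  have hginv : ∀ y : ℝ, 𝓕⁻ g y = φ (y/2) - φ y := by
    intro y
    rw [heq]
    -- the two pieces
    set k : ℝ → ℂ := fun u => Complex.exp ((2*π*(u*(y/2)) : ℝ) * Complex.I) * h u with hk_def
    have hk_cont : Continuous k := by
      apply Continuous.mul _ hh_cont
      apply Complex.continuous_exp.comp
      exact (Complex.continuous_ofReal.comp
        (continuous_const.mul (continuous_id.mul continuous_const))).mul continuous_const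
    have hk_int : Integrable k := by
      apply hk_cont.integrable_of_hasCompactSupport
      apply HasCompactSupport.intro (isCompact_Icc (a := (-2 : ℝ)) (b := 2))
      intro x hx
      simp [hk_def, hh0 x hx]
    have hky_cont : Continuous (fun v : ℝ => Complex.exp ((2*π*(v*y) : ℝ) * Complex.I) * h v) := by
      apply Continuous.mul _ hh_cont
      apply Complex.continuous_exp.comp
      exact (Complex.continuous_ofReal.comp
        (continuous_const.mul (continuous_id.mul continuous_const))).mul continuous_const
    have hky_int : Integrable (fun v : ℝ => Complex.exp ((2*π*(v*y) : ℝ) * Complex.I) * h v) := by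
      apply hky_cont.integrable_of_hasCompactSupport
      apply HasCompactSupport.intro (isCompact_Icc (a := (-2 : ℝ)) (b := 2))
      intro x hx
      simp [hh0 x hx]
    have hk2_int : Integrable (fun v : ℝ => (2:ℂ) * k (2*v)) := by
      have : Integrable (fun v : ℝ => k (2*v)) := by
        apply Continuous.integrable_of_hasCompactSupport
        · exact hk_cont.comp (continuous_const.mul continuous_id)
        · apply HasCompactSupport.intro (isCompact_Icc (a := (-1 : ℝ)) (b := 1))
          intro x hx
          simp only [mem_Icc, not_and_or, not_le] at hx
          have hx' : (2*x) ∉ Icc (-2:ℝ) 2 := by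
            simp only [mem_Icc, not_and_or, not_le]
            rcases hx with h' | h'
            · left; linarith
            · right; linarith
          simp [hk_def, hh0 _ hx']
      simpa using this.const_mul (2:ℂ)
    have split : (fun v : ℝ => Complex.exp (((2*π*(v*y) : ℝ) : ℂ) * Complex.I) * g v)
        = fun v : ℝ => (2:ℂ) * k (2*v)
          - Complex.exp ((2*π*(v*y) : ℝ) * Complex.I) * h v := by
      funext v
      have harg : (2*π*((2*v)*(y/2)) : ℝ) = (2*π*(v*y) : ℝ) := by ring
      simp only [hk_def, harg, hg_def, hh_def]
      push_cast
      ring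
    rw [split, integral_sub hk2_int hky_int, MeasureTheory.integral_const_mul]
    have sub1 : ∫ v : ℝ, k (2*v) = |(2:ℝ)⁻¹| • ∫ u : ℝ, k u :=
      Measure.integral_comp_mul_left k 2
    have half1 : 𝓕⁻ h (y/2) = ∫ u : ℝ, k u := by
      rw [heq]
    have half2 : 𝓕⁻ h y = ∫ v : ℝ, Complex.exp ((2*π*(v*y) : ℝ) * Complex.I) * h v := heq h y
    rw [sub1, hφh, half1, half2]
    have habs2 : |(2:ℝ)⁻¹| = (2:ℝ)⁻¹ := by norm_num
    rw [habs2, Complex.real_smul]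
    push_cast
    ring
  -- the pointwise identity away from 0
  have hψeq : ∀ x : ℝ, x ≠ 0 → 𝓕⁻ F x = ψ x := by
    intro x hx
    have e1 := congrFun key1 (-x)
    have lhs : 𝓕 (deriv F) (-x) = c * 𝓕⁻ g x := by
      rw [hF_deriv', ← Real.fourierInv_eq_fourier_neg,
        heq, heq, ← MeasureTheory.integral_const_mul]
      congr 1
      funext v
      ring
    have rhs : (2 * (π:ℂ) * Complex.I * ((-x : ℝ) : ℂ)) • 𝓕 F (-x) = c * x * 𝓕⁻ F x := by
      rw [← Real.fourierInv_eq_fourier_neg]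
      simp only [smul_eq_mul, hc]
      push_cast
      ring
    rw [lhs, rhs] at e1
    have cancel : 𝓕⁻ g x = x * 𝓕⁻ F x := by
      have := e1
      rw [mul_assoc] at this
      exact mul_left_cancel₀ hc_ne this
    rw [hψ]
    simp only
    rw [← hginv x, cancel]
    have hxC : (x : ℂ) ≠ 0 := by exact_mod_cast hx
    field_simp
  -- a.e. equality and conclusion
  have hae : ψ =ᵐ[volume] 𝓕⁻ F := by
    have h0 : ∀ᵐ x : ℝ, x ≠ 0 := by
      rw [MeasureTheory.ae_iff]
      have : {x : ℝ | ¬ x ≠ 0} = {(0:ℝ)} := by ext x; simp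
      rw [this]
      exact measure_singleton 0
    exact h0.mono fun x hx => (hψeq x hx).symm
  have hfinal : ∀ t : ℝ, 𝓕 ψ t = F t := by
    intro t
    have step : 𝓕 ψ t = 𝓕 (𝓕⁻ F) t := by
      rw [Real.fourier_eq, Real.fourier_eq]
      exact integral_congr_ae (hae.mono fun x hx => by simp only [hx])
    rw [step, hinv]
  refine ⟨fun t => ?_, fun t ht => ?_⟩
  · rw [hfinal t, hFt t, hGt t, hc]
  · rw [hfinal t, hFt t, hG_zero t ht, mul_zero]
end

section
/- For every exponent σ ∈ [0, 1/(d+1)] with d ≥ 3, there is a constant C (independent of a, b) such that for all real a, b with a² + b² = 1 and b ≠ 0, ∫_0^∞ |b| ρ^{-σ} / ((ρ - |a|)² + b²) dρ ≤ C. -/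
/-!
Split `(0, ∞)` at `1/2`. Near the origin the Poisson kernel `|b| / ((ρ - |a|)² + b²)` is at most
`4`, because on the unit circle its denominator is `ρ² - 2ρ|a| + 1 ≥ (1 - ρ)²`; what remains is
`∫₀¹ ρ^{-σ} = 1/(1 - σ)`. Away from the origin `ρ^{-σ} ≤ 2^σ`, and the kernel integrates to `π`
over the whole line, being `π` times a Cauchy density.
-/

open MeasureTheory Set Real ProbabilityTheory

lemma lintegral_ofReal_poisson_kernel {b : ℝ} (hb : b ≠ 0) (c : ℝ) :
    ∫⁻ x, ENNReal.ofReal (|b| / ((x - c) ^ 2 + b ^ 2)) = ENNReal.ofReal π := by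
  have hγ : nnabs b ≠ 0 := by simpa using hb
  have hpdf : ∀ x, ENNReal.ofReal (|b| / ((x - c) ^ 2 + b ^ 2))
      = ENNReal.ofReal π * cauchyPDF c (nnabs b) x := by
    intro x
    rw [cauchyPDF, ← ENNReal.ofReal_mul pi_pos.le, cauchyPDFReal_def]
    congr 1
    simp only [Real.coe_nnabs, sq_abs]
    field_simp
  simp_rw [hpdf]
  rw [lintegral_const_mul _ (measurable_cauchyPDF _ _), lintegral_cauchyPDF_eq_one _ hγ, mul_one]

lemma lintegral_Ioc_zero_one_ofReal_rpow_neg {σ : ℝ} (hσ : σ < 1) :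
    ∫⁻ ρ in Ioc (0 : ℝ) 1, ENNReal.ofReal (ρ ^ (-σ)) = ENNReal.ofReal (1 - σ)⁻¹ := by
  have hint : IntegrableOn (fun ρ : ℝ => ρ ^ (-σ)) (Ioc 0 1) := by
    rw [← intervalIntegrable_iff_integrableOn_Ioc_of_le zero_le_one]
    exact intervalIntegral.intervalIntegrable_rpow' (by linarith)
  rw [← ofReal_integral_eq_lintegral_ofReal hint
    (ae_restrict_of_forall_mem measurableSet_Ioc fun ρ hρ => rpow_nonneg hρ.1.le _),
    ← intervalIntegral.integral_of_le zero_le_one, integral_rpow (Or.inl (by linarith)),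
    zero_rpow (by linarith), one_rpow]
  congr 1
  ring

lemma one_sub_sq_le_sq_sub_abs_add_sq {a b ρ : ℝ} (hab : a ^ 2 + b ^ 2 = 1) (hρ : 0 ≤ ρ) :
    (1 - ρ) ^ 2 ≤ (ρ - |a|) ^ 2 + b ^ 2 := by
  have ha : |a| ≤ 1 := abs_le_one_iff_mul_self_le_one.mpr (by nlinarith)
  nlinarith [sq_abs a]

lemma poisson_kernel_le_four {a b ρ : ℝ} (hab : a ^ 2 + b ^ 2 = 1) (hρ : ρ ∈ Ioc (0 : ℝ) (1 / 2)) :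
    |b| / ((ρ - |a|) ^ 2 + b ^ 2) ≤ 4 := by
  have hb : |b| ≤ 1 := abs_le_one_iff_mul_self_le_one.mpr (by nlinarith)
  have hden : 1 / 4 ≤ (ρ - |a|) ^ 2 + b ^ 2 := by
    nlinarith [one_sub_sq_le_sq_sub_abs_add_sq hab hρ.1.le, hρ.2]
  rw [div_le_iff₀ (by linarith)]
  linarith

lemma rpow_neg_le_two_rpow {σ ρ : ℝ} (hσ : 0 ≤ σ) (hρ : 1 / 2 < ρ) : ρ ^ (-σ) ≤ 2 ^ σ := by
  calc ρ ^ (-σ) ≤ (1 / 2) ^ (-σ) := rpow_le_rpow_of_nonpos (by norm_num) hρ.le (by linarith)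
    _ = 2 ^ σ := by rw [one_div, inv_rpow zero_le_two, ← rpow_neg zero_le_two, neg_neg]

theorem lintegral_Ioi_poisson_kernel_mul_rpow_neg_le {σ a b : ℝ} (hσ₀ : 0 ≤ σ) (hσ₁ : σ < 1)
    (hab : a ^ 2 + b ^ 2 = 1) (hb : b ≠ 0) :
    ∫⁻ ρ in Ioi (0 : ℝ), ENNReal.ofReal (|b| * ρ ^ (-σ) / ((ρ - |a|) ^ 2 + b ^ 2))
      ≤ ENNReal.ofReal (4 * (1 - σ)⁻¹ + 2 ^ σ * π) := by
  set P : ℝ → ℝ := fun ρ => |b| / ((ρ - |a|) ^ 2 + b ^ 2)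
  have hP : ∀ ρ, 0 ≤ P ρ := fun ρ => by positivity
  have hsplit : ∀ ρ, ENNReal.ofReal (|b| * ρ ^ (-σ) / ((ρ - |a|) ^ 2 + b ^ 2))
      = ENNReal.ofReal (ρ ^ (-σ)) * ENNReal.ofReal (P ρ) := fun ρ => by
    rw [← ENNReal.ofReal_mul' (hP ρ)]
    congr 1
    simp only [P]
    ring
  have hnear : ∫⁻ ρ in Ioc (0 : ℝ) (1 / 2), ENNReal.ofReal (ρ ^ (-σ)) * ENNReal.ofReal (P ρ)
      ≤ ENNReal.ofReal (1 - σ)⁻¹ * 4 :=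
    calc _ ≤ ∫⁻ ρ in Ioc (0 : ℝ) (1 / 2), ENNReal.ofReal (ρ ^ (-σ)) * 4 := by
          refine setLIntegral_mono' measurableSet_Ioc fun ρ hρ => ?_
          gcongr
          simpa using ENNReal.ofReal_le_ofReal (poisson_kernel_le_four hab hρ)
      _ ≤ (∫⁻ ρ in Ioc (0 : ℝ) 1, ENNReal.ofReal (ρ ^ (-σ))) * 4 := by
          rw [lintegral_mul_const' _ _ (by simp)]
          gcongr ?_ * 4
          exact lintegral_mono_set (Ioc_subset_Ioc_right (by norm_num))
      _ = _ := by rw [lintegral_Ioc_zero_one_ofReal_rpow_neg hσ₁]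
  have hfar : ∫⁻ ρ in Ioi (1 / 2 : ℝ), ENNReal.ofReal (ρ ^ (-σ)) * ENNReal.ofReal (P ρ)
      ≤ ENNReal.ofReal (2 ^ σ) * ENNReal.ofReal π :=
    calc _ ≤ ∫⁻ ρ in Ioi (1 / 2 : ℝ), ENNReal.ofReal (2 ^ σ) * ENNReal.ofReal (P ρ) :=
          setLIntegral_mono' measurableSet_Ioi fun ρ hρ => by
            gcongr
            exact rpow_neg_le_two_rpow hσ₀ hρ
      _ ≤ ∫⁻ ρ, ENNReal.ofReal (2 ^ σ) * ENNReal.ofReal (P ρ) := setLIntegral_le_lintegral (Ioi _) _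
      _ = _ := by rw [lintegral_const_mul' _ _ ENNReal.ofReal_ne_top,
          lintegral_ofReal_poisson_kernel hb]
  simp_rw [hsplit]
  rw [← Ioc_union_Ioi_eq_Ioi (by norm_num : (0 : ℝ) ≤ 1 / 2),
    lintegral_union measurableSet_Ioi (Ioc_disjoint_Ioi le_rfl)]
  calc _ ≤ ENNReal.ofReal (1 - σ)⁻¹ * 4 + ENNReal.ofReal (2 ^ σ) * ENNReal.ofReal π :=
        add_le_add hnear hfar
    _ = _ := by
      rw [← ENNReal.ofReal_mul (by positivity), ← ENNReal.ofReal_ofNat 4,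
        ← ENNReal.ofReal_mul (inv_nonneg.2 (by linarith)),
        ← ENNReal.ofReal_add (by positivity) (by positivity), mul_comm (1 - σ)⁻¹]

/-- For every `σ ∈ [0, 1/(d+1)]` with `d ≥ 3`, there is a constant `C` (independent of
`a, b`) such that for all real `a, b` with `a² + b² = 1` and `b ≠ 0`,
`∫_0^∞ |b| ρ^{-σ} / ((ρ - |a|)² + b²) dρ ≤ C`. -/
theorem uniform_poisson_integral_bound (d : ℕ) (hd : 3 ≤ d) (σ : ℝ)
    (hσ : σ ∈ Icc (0 : ℝ) (1 / (d + 1))) :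
    ∃ C : ℝ, ∀ a b : ℝ, a ^ 2 + b ^ 2 = 1 → b ≠ 0 →
      ∫⁻ ρ in Ioi (0 : ℝ),
        ENNReal.ofReal (|b| * ρ ^ (-σ) / ((ρ - |a|) ^ 2 + b ^ 2)) ≤ ENNReal.ofReal C := by
  obtain ⟨hσ₀, hσd⟩ := hσ
  have hd₁ : (1 : ℝ) < d + 1 := by
    have : (3 : ℝ) ≤ d := by exact_mod_cast hd
    linarith
  have hσ₁ : σ < 1 := hσd.trans_lt ((div_lt_one (by linarith)).mpr hd₁)
  exact ⟨_, fun a b hab hb => lintegral_Ioi_poisson_kernel_mul_rpow_neg_le hσ₀ hσ₁ hab hb⟩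
end
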